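/- Fix natural numbers d ≤ n. Then there exist constants C₁, C₂ > 0 such that for every linear d-simplex Δ in ℝⁿ with vertices v₀, …, v_d and every ζ > 0 satisfying ζ < min{r_min(Δ)/2, 1/Λ(Δ)}, the set 𝒟(Δ, ζ) = { Gr(⟨v₀', …, v_d'⟩) : |v_i' − v_i| < ζ for all i, and v₀', …, v_d' affinely independent } ⊆ Gr(n,d) satisfies: (i) every d-dimensional subspace D of ℝⁿ with d_proj(Gr(Δ), D) < C₁ ζ / r_max(Δ) belongs to 𝒟(Δ, ζ), and (ii) every D ∈ 𝒟(Δ, ζ) satisfies d_proj(Gr(Δ), D) < C₂ ζ Λ(Δ). -/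

import Mathlib

noncomputable section

open Metric Set

/-- Two linear subspaces of ℝⁿ are transverse if the dimension of their span is maximal. -/
def Transv {n : ℕ} (V W : Submodule ℝ (EuclideanSpace ℝ (Fin n))) : Prop :=
  Module.finrank ℝ ↥(V ⊔ W) = min (Module.finrank ℝ ↥V + Module.finrank ℝ ↥W) n

/-- The space of directions of the affine span of a family of points (Gr(Δ)). -/
def simplexDir {n m : ℕ} (v : Fin m → EuclideanSpace ℝ (Fin n)) :
    Submodule ℝ (EuclideanSpace ℝ (Fin n)) :=
  (affineSpan ℝ (Set.range v)).direction

/-- Orthogonal projection of ℝⁿ onto the orthogonal complement of V, as a map ℝⁿ → ℝⁿ. -/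
def projPerp {n : ℕ} (V : Submodule ℝ (EuclideanSpace ℝ (Fin n)))
    (x : EuclideanSpace ℝ (Fin n)) : EuclideanSpace ℝ (Fin n) :=
  (Vᗮ.orthogonalProjectionOnto x : EuclideanSpace ℝ (Fin n))

/-- Orthogonal projection onto V as a continuous linear endomorphism of ℝⁿ. -/
def projCL {n : ℕ} (V : Submodule ℝ (EuclideanSpace ℝ (Fin n))) :
    EuclideanSpace ℝ (Fin n) →L[ℝ] EuclideanSpace ℝ (Fin n) :=
  V.subtypeL.comp (V.orthogonalProjectionOnto)

/-- Operator-norm distance between orthogonal projections. -/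
def dProj {n : ℕ} (V W : Submodule ℝ (EuclideanSpace ℝ (Fin n))) : ℝ :=
  ‖projCL V - projCL W‖

/-- `p⋆Δ` is `δ`-semitransverse to `𝔉(V)` in `p`. -/
def SemiT {n m : ℕ} (δ : ℝ) (p : EuclideanSpace ℝ (Fin n))
    (v : Fin m → EuclideanSpace ℝ (Fin n))
    (V : Submodule ℝ (EuclideanSpace ℝ (Fin n))) : Prop :=
  ∀ p' : EuclideanSpace ℝ (Fin n), dist p' p < δ →
    AffineIndependent ℝ (Fin.cons p' v : Fin (m+1) → EuclideanSpace ℝ (Fin n)) ∧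
    Transv (simplexDir (Fin.cons p' v : Fin (m+1) → EuclideanSpace ℝ (Fin n))) V

/-- Maximal distance between two vertices of a simplex. -/
def rMax {n m : ℕ} (v : Fin m → EuclideanSpace ℝ (Fin n)) : ℝ :=
  ⨆ i, ⨆ j, dist (v i) (v j)

/-- Minimal distance between a vertex and the affine span of the opposite face. -/
def rMin {n m : ℕ} (v : Fin m → EuclideanSpace ℝ (Fin n)) : ℝ :=
  ⨅ i, Metric.infDist (v i) (affineSpan ℝ (v '' {i}ᶜ) : Set (EuclideanSpace ℝ (Fin n)))

/-- The degeneracy quantity Λ(Δ). -/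
def Lam {n m : ℕ} (v : Fin (m+1) → EuclideanSpace ℝ (Fin n)) : ℝ :=
  sSup {t : ℝ | ∃ lam : Fin m → ℝ,
    ‖∑ i, lam i • (v i.succ - v 0)‖ = 1 ∧ ∃ i, t = |lam i|}

/-- ε-transversality of a simplex with vertices `v` to the constant foliation `𝔉(V)`. -/
def EpsT {n m : ℕ} (ε : ℝ) (v : Fin (m+1) → EuclideanSpace ℝ (Fin n))
    (V : Submodule ℝ (EuclideanSpace ℝ (Fin n))) : Prop :=
  ∀ D : Submodule ℝ (EuclideanSpace ℝ (Fin n)),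
    Module.finrank ℝ ↥D = m → dProj (simplexDir v) D < ε → Transv D V

/-- δ-semitransversality of a simplex in its `i`-th vertex. -/
def STat {n m : ℕ} (δ : ℝ) (w : Fin m → EuclideanSpace ℝ (Fin n)) (i : Fin m)
    (V : Submodule ℝ (EuclideanSpace ℝ (Fin n))) : Prop :=
  ∀ p' : EuclideanSpace ℝ (Fin n), dist p' (w i) < δ →
    AffineIndependent ℝ (Function.update w i p') ∧
    Transv (simplexDir (Function.update w i p')) V

/-- The coordinate subspace ℝᵏ × {0} of ℝⁿ. -/
def stdFol (n k : ℕ) : Submodule ℝ (EuclideanSpace ℝ (Fin n)) where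
  carrier := {x | ∀ i : Fin n, k ≤ (i : ℕ) → x i = 0}
  zero_mem' := fun i _ => rfl
  add_mem' := by
    intro x y hx hy i hi
    show x i + y i = 0
    rw [hx i hi, hy i hi, add_zero]
  smul_mem' := by
    intro c x hx i hi
    show c * x i = 0
    rw [hx i hi, mul_zero]

/-- Graph of a linear map V → V⊥ as a subspace of ℝⁿ. -/
def graphOf {n : ℕ} {V : Submodule ℝ (EuclideanSpace ℝ (Fin n))}
    (T : ↥V →L[ℝ] ↥Vᗮ) : Submodule ℝ (EuclideanSpace ℝ (Fin n)) :=
  LinearMap.range (V.subtype + Vᗮ.subtype.comp T.toLinearMap)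

/-!
(i) If `‖P_V - P_D‖ < 1` for subspaces of equal dimension, `P_D` maps `V = Gr(Δ)` isomorphically
onto `D`. Replacing each vertex `vᵢ` by `v₀ + P_D (vᵢ - v₀)` therefore gives a simplex with
`Gr = D`, and `vᵢ` moves by `‖(P_V - P_D)(vᵢ - v₀)‖ ≤ ‖P_V - P_D‖ r_max`; the bound `ζ < r_min / 2`
guarantees `‖P_V - P_D‖ < 1`.

(ii) By definition of `Λ`, every `y ∈ V` is `∑ λᵢ (vᵢ - v₀)` with `|λᵢ| ≤ Λ ‖y‖`, and the same
combination of the perturbed edges lies in `V'` within `2dζΛ‖y‖` of `y`. For subspaces of equal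
dimension a one-sided estimate `‖y - P_{V'} y‖ ≤ δ ‖y‖` on `V` is two-sided up to a factor `2`
(as `P_{V'}` is then injective, hence onto, from `V` to `V'`), and
`P_V - P_{V'} = (1 - P_{V'}) P_V - ((1 - P_V) P_{V'})⋆` gives `‖P_V - P_{V'}‖ ≤ 4δ`.
-/

section Projection

variable {E : Type*} [NormedAddCommGroup E] [InnerProductSpace ℝ E]
  {K L : Submodule ℝ E} [K.HasOrthogonalProjection] [L.HasOrthogonalProjection]

theorem Submodule.norm_sub_starProjection_le {x y : E} (hy : y ∈ K) :
    ‖x - K.starProjection x‖ ≤ ‖x - y‖ := by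
  rw [K.starProjection_minimal x]
  exact ciInf_le ⟨0, by rintro _ ⟨z, rfl⟩; exact norm_nonneg _⟩ (⟨y, hy⟩ : K)

theorem Submodule.map_starProjection_eq_of_norm_sub_lt_one [FiniteDimensional ℝ K]
    [FiniteDimensional ℝ L] (hKL : Module.finrank ℝ K = Module.finrank ℝ L)
    (h : ‖K.starProjection - L.starProjection‖ < 1) : K.map L.starProjection.toLinearMap = L := by
  have hinj : Function.Injective (L.starProjection.toLinearMap ∘ₗ K.subtype) := by
    rw [← LinearMap.ker_eq_bot, Submodule.eq_bot_iff]
    rintro ⟨y, hy⟩ hPy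
    replace hPy : L.starProjection y = 0 := hPy
    have hle := (K.starProjection - L.starProjection).le_opNorm y
    rw [sub_apply, K.starProjection_eq_self_iff.mpr hy, hPy, sub_zero] at hle
    exact Subtype.ext (norm_eq_zero.mp (by nlinarith [norm_nonneg y]))
  refine Submodule.eq_of_le_of_finrank_eq ?_ ?_
  · rintro _ ⟨y, -, rfl⟩
    exact L.starProjection_apply_mem y
  · rw [← hKL, ← LinearMap.finrank_range_of_inj hinj, LinearMap.range_comp,
      Submodule.range_subtype]

theorem Submodule.norm_one_sub_starProjection_mul_le {δ : ℝ} (hδ : 0 ≤ δ)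
    (h : ∀ y ∈ K, ‖y - L.starProjection y‖ ≤ δ * ‖y‖) :
    ‖(1 - L.starProjection) * K.starProjection‖ ≤ δ := by
  refine ContinuousLinearMap.opNorm_le_bound _ hδ fun x => ?_
  calc ‖((1 - L.starProjection) * K.starProjection) x‖
      = ‖K.starProjection x - L.starProjection (K.starProjection x)‖ := rfl
    _ ≤ δ * ‖K.starProjection x‖ := h _ (K.starProjection_apply_mem x)
    _ ≤ δ * ‖x‖ := by gcongr; exact K.norm_starProjection_apply_le x

theorem Submodule.norm_sub_starProjection_le_of_finrank_eq [FiniteDimensional ℝ K]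
    [FiniteDimensional ℝ L] (hKL : Module.finrank ℝ K = Module.finrank ℝ L) {δ : ℝ}
    (hδ₀ : 0 ≤ δ) (hδ : δ ≤ 1 / 2) (h : ∀ y ∈ K, ‖y - L.starProjection y‖ ≤ δ * ‖y‖)
    {w : E} (hw : w ∈ L) :
    ‖w - K.starProjection w‖ ≤ 2 * δ * ‖w‖ := by
  set f : K →ₗ[ℝ] L := L.orthogonalProjectionOnto.toLinearMap ∘ₗ K.subtype
  have hinj : Function.Injective f := by
    rw [← LinearMap.ker_eq_bot, Submodule.eq_bot_iff]
    rintro ⟨y, hy⟩ hfy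
    have hPy : L.starProjection y = 0 := by
      simp [Submodule.starProjection_apply, show L.orthogonalProjectionOnto y = 0 from hfy]
    have := h y hy
    rw [hPy, sub_zero] at this
    exact Subtype.ext (norm_eq_zero.mp (by nlinarith [norm_nonneg y]))
  obtain ⟨⟨y, hy⟩, hfy⟩ :=
    (LinearMap.injective_iff_surjective_of_finrank_eq_finrank hKL).mp hinj ⟨w, hw⟩
  have hPy : L.starProjection y = w := congrArg Subtype.val hfy
  have hyw : ‖y - w‖ ≤ δ * ‖y‖ := hPy ▸ h y hy
  have hy_le : ‖y‖ ≤ 2 * ‖w‖ := by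
    nlinarith [norm_sub_norm_le y w, norm_nonneg y, norm_nonneg (y - w)]
  calc ‖w - K.starProjection w‖ ≤ ‖w - y‖ := K.norm_sub_starProjection_le hy
    _ = ‖y - w‖ := norm_sub_rev _ _
    _ ≤ δ * ‖y‖ := hyw
    _ ≤ 2 * δ * ‖w‖ := by nlinarith [norm_nonneg w, norm_nonneg y]

theorem Submodule.norm_starProjection_sub_le [CompleteSpace E] :
    ‖K.starProjection - L.starProjection‖ ≤ ‖(1 - L.starProjection) * K.starProjection‖ +
      ‖(1 - K.starProjection) * L.starProjection‖ := by
  have hK : star K.starProjection = K.starProjection := (isSelfAdjoint_starProjection K).star_eq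
  have hL : star L.starProjection = L.starProjection := (isSelfAdjoint_starProjection L).star_eq
  have hsym : ‖(1 - K.starProjection) * L.starProjection‖ =
      ‖L.starProjection * (1 - K.starProjection)‖ := by
    rw [← norm_star, star_mul, star_sub, star_one, hK, hL]
  rw [hsym]
  calc ‖K.starProjection - L.starProjection‖
      = ‖(1 - L.starProjection) * K.starProjection -
          L.starProjection * (1 - K.starProjection)‖ := by
        congr 1; noncomm_ring
    _ ≤ _ := norm_sub_le _ _

theorem Submodule.norm_starProjection_sub_le_four_mul [CompleteSpace E] [FiniteDimensional ℝ K]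
    [FiniteDimensional ℝ L] (hKL : Module.finrank ℝ K = Module.finrank ℝ L) {δ : ℝ}
    (hδ : 0 ≤ δ) (h : ∀ y ∈ K, ‖y - L.starProjection y‖ ≤ δ * ‖y‖) :
    ‖K.starProjection - L.starProjection‖ ≤ 4 * δ := by
  rcases le_or_gt δ (1 / 2) with hδ' | hδ'
  · have hKL' := norm_one_sub_starProjection_mul_le hδ h
    have hLK := norm_one_sub_starProjection_mul_le (by positivity) fun w hw =>
      norm_sub_starProjection_le_of_finrank_eq hKL hδ hδ' h hw
    linarith [norm_starProjection_sub_le (K := K) (L := L)]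
  · calc ‖K.starProjection - L.starProjection‖
        ≤ ‖K.starProjection‖ + ‖L.starProjection‖ := norm_sub_le _ _
      _ ≤ 4 * δ := by linarith [K.starProjection_norm_le, L.starProjection_norm_le]

end Projection

section Simplex

variable {n m : ℕ}

local notation "𝔼" => EuclideanSpace ℝ (Fin n)

theorem dProj_eq_norm (V W : Submodule ℝ 𝔼) :
    dProj V W = ‖V.starProjection - W.starProjection‖ := rfl

theorem dist_le_rMax (v : Fin m → 𝔼) (i j : Fin m) : dist (v i) (v j) ≤ rMax v :=
  (le_ciSup (Set.finite_range _).bddAbove j).trans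
    (le_ciSup (f := fun i => ⨆ j, dist (v i) (v j)) (Set.finite_range _).bddAbove i)

theorem rMin_le_dist (v : Fin m → 𝔼) {i j : Fin m} (hij : i ≠ j) :
    rMin v ≤ dist (v i) (v j) := by
  have hmem : v j ∈ (affineSpan ℝ (v '' {i}ᶜ) : Set 𝔼) :=
    subset_affineSpan ℝ _ ⟨j, hij.symm, rfl⟩
  calc rMin v ≤ infDist (v i) (affineSpan ℝ (v '' {i}ᶜ) : Set 𝔼) :=
        ciInf_le ⟨0, by rintro _ ⟨k, rfl⟩; exact infDist_nonneg⟩ i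
    _ ≤ dist (v i) (v j) := infDist_le_dist_of_mem hmem

theorem rMin_le_rMax (v : Fin m → 𝔼) : rMin v ≤ rMax v := by
  rcases subsingleton_or_nontrivial (Fin m) with hm | hm
  · have hrMin : rMin v = 0 := by
      have hface : ∀ i, v '' {i}ᶜ = ∅ := fun i => by
        rw [Set.image_eq_empty]
        ext j
        simp [Subsingleton.elim j i]
      simp [rMin, hface]
    rw [hrMin]
    exact Real.iSup_nonneg fun i => Real.iSup_nonneg fun j => dist_nonneg
  · obtain ⟨i, j, hij⟩ := exists_pair_ne (Fin m)
    exact (rMin_le_dist v hij).trans (dist_le_rMax v i j)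

theorem simplexDir_comp_affineMap (f : 𝔼 →ᵃ[ℝ] 𝔼) (v : Fin m → 𝔼) :
    simplexDir (f ∘ v) = (simplexDir v).map f.linear := by
  rw [simplexDir, simplexDir, direction_affineSpan, direction_affineSpan, AffineMap.map_vectorSpan,
    Set.range_comp]

theorem sub_mem_simplexDir (v : Fin m → 𝔼) (i j : Fin m) : v i - v j ∈ simplexDir v :=
  AffineSubspace.vsub_mem_direction (subset_affineSpan ℝ _ (mem_range_self i))
    (subset_affineSpan ℝ _ (mem_range_self j))

theorem finrank_simplexDir {v : Fin (m + 1) → 𝔼} (hv : AffineIndependent ℝ v) :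
    Module.finrank ℝ (simplexDir v) = m := by
  rw [simplexDir, direction_affineSpan]
  exact hv.finrank_vectorSpan (by simp)

theorem affineIndependent_of_finrank_simplexDir {v : Fin (m + 1) → 𝔼}
    (hv : Module.finrank ℝ (simplexDir v) = m) : AffineIndependent ℝ v := by
  rw [affineIndependent_iff_finrank_vectorSpan_eq ℝ v (n := m) (by simp), ← direction_affineSpan]
  exact hv

theorem simplexDir_eq_span (v : Fin (m + 1) → 𝔼) :
    simplexDir v = Submodule.span ℝ (Set.range fun i : Fin m => v i.succ - v 0) := by
  have hcons : (fun i => v i -ᵥ v 0) = Fin.cons 0 fun i : Fin m => v i.succ - v 0 := by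
    ext i : 1
    refine Fin.cases ?_ (fun j => ?_) i <;> simp [vsub_eq_sub]
  rw [simplexDir, direction_affineSpan, vectorSpan_range_eq_span_range_vsub_right ℝ v 0, hcons,
    Fin.range_cons, Submodule.span_insert_zero]

theorem linearIndependent_succ_sub_zero {v : Fin (m + 1) → 𝔼} (hv : AffineIndependent ℝ v) :
    LinearIndependent ℝ fun i : Fin m => v i.succ - v 0 := by
  rw [affineIndependent_iff_linearIndependent_vsub ℝ v 0] at hv
  have h := hv.comp (fun i : Fin m => (⟨i.succ, i.succ_ne_zero⟩ : {x // x ≠ (0 : Fin (m + 1))}))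
    fun i j hij => Fin.succ_injective _ (congrArg Subtype.val hij)
  simpa [Function.comp_def, vsub_eq_sub] using h

theorem lam_nonneg (v : Fin (m + 1) → 𝔼) : 0 ≤ Lam v :=
  Real.sSup_nonneg fun _ ⟨_, _, _, ht⟩ => ht ▸ abs_nonneg _

theorem bddAbove_lam_set {v : Fin (m + 1) → 𝔼} (hv : AffineIndependent ℝ v) :
    BddAbove {t : ℝ | ∃ lam : Fin m → ℝ,
      ‖∑ i, lam i • (v i.succ - v 0)‖ = 1 ∧ ∃ i, t = |lam i|} := by
  obtain ⟨C, -, hC⟩ := LinearMap.exists_antilipschitzWith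
    (Fintype.linearCombination ℝ fun i : Fin m => v i.succ - v 0)
    (LinearMap.ker_eq_bot.mpr <| linearIndependent_iff_injective_fintypeLinearCombination.mp
      (linearIndependent_succ_sub_zero hv))
  refine ⟨C, ?_⟩
  rintro _ ⟨lam, hlam, i, rfl⟩
  calc |lam i| = ‖lam i‖ := (Real.norm_eq_abs _).symm
    _ ≤ ‖lam‖ := norm_le_pi_norm lam i
    _ ≤ C * ‖Fintype.linearCombination ℝ (fun i : Fin m => v i.succ - v 0) lam‖ := by
        simpa using hC.le_mul_dist lam 0
    _ = C := by rw [Fintype.linearCombination_apply, hlam, mul_one]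

theorem abs_le_lam_mul_norm_sum {v : Fin (m + 1) → 𝔼} (hv : AffineIndependent ℝ v)
    (lam : Fin m → ℝ) (i : Fin m) :
    |lam i| ≤ Lam v * ‖∑ j, lam j • (v j.succ - v 0)‖ := by
  set s := ∑ j, lam j • (v j.succ - v 0) with hs_def
  rcases eq_or_ne s 0 with hs | hs
  · rw [Fintype.linearIndependent_iff.mp (linearIndependent_succ_sub_zero hv) lam hs i, hs]
    simp
  · have hpos : 0 < ‖s‖ := norm_pos_iff.mpr hs
    have hunit : ‖∑ j, (lam j / ‖s‖) • (v j.succ - v 0)‖ = 1 := by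
      simp_rw [div_eq_inv_mul, ← smul_smul, ← Finset.smul_sum, ← hs_def, norm_smul, norm_inv,
        norm_norm, inv_mul_cancel₀ hpos.ne']
    have := le_csSup (bddAbove_lam_set hv) ⟨_, hunit, i, rfl⟩
    rwa [abs_div, abs_of_pos hpos, div_le_iff₀ hpos] at this

theorem norm_sub_starProjection_simplexDir_le {v v' : Fin (m + 1) → 𝔼}
    (hv : AffineIndependent ℝ v) {ζ : ℝ} (hvv' : ∀ i, dist (v' i) (v i) ≤ ζ) {y : 𝔼}
    (hy : y ∈ simplexDir v) :
    ‖y - (simplexDir v').starProjection y‖ ≤ 2 * m * ζ * Lam v * ‖y‖ := by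
  rw [simplexDir_eq_span] at hy
  obtain ⟨lam, rfl⟩ := (Submodule.mem_span_range_iff_exists_fun ℝ).mp hy
  set y := ∑ i, lam i • (v i.succ - v 0)
  have hedge : ∀ i : Fin m, ‖(v i.succ - v 0) - (v' i.succ - v' 0)‖ ≤ 2 * ζ := fun i => by
    calc _ = ‖(v' 0 - v 0) - (v' i.succ - v i.succ)‖ := by congr 1; abel
      _ ≤ ‖v' 0 - v 0‖ + ‖v' i.succ - v i.succ‖ := norm_sub_le _ _
      _ ≤ 2 * ζ := by rw [← dist_eq_norm, ← dist_eq_norm]; linarith [hvv' 0, hvv' i.succ]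
  have hmem : ∑ i, lam i • (v' i.succ - v' 0) ∈ simplexDir v' :=
    Submodule.sum_mem _ fun i _ => Submodule.smul_mem _ _ (sub_mem_simplexDir v' _ _)
  calc ‖y - (simplexDir v').starProjection y‖
      ≤ ‖y - ∑ i, lam i • (v' i.succ - v' 0)‖ := Submodule.norm_sub_starProjection_le hmem
    _ = ‖∑ i, lam i • ((v i.succ - v 0) - (v' i.succ - v' 0))‖ := by
        simp only [y, smul_sub, Finset.sum_sub_distrib]
    _ ≤ ∑ i, ‖lam i • ((v i.succ - v 0) - (v' i.succ - v' 0))‖ := norm_sum_le _ _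
    _ ≤ ∑ _i : Fin m, Lam v * ‖y‖ * (2 * ζ) := Finset.sum_le_sum fun i _ => by
        have hlam := abs_le_lam_mul_norm_sum hv lam i
        rw [norm_smul, Real.norm_eq_abs]
        exact mul_le_mul hlam (hedge i) (norm_nonneg _) ((abs_nonneg _).trans hlam)
    _ = 2 * m * ζ * Lam v * ‖y‖ := by simp; ring

theorem dProj_simplexDir_le {v v' : Fin (m + 1) → 𝔼} (hv : AffineIndependent ℝ v)
    (hv' : AffineIndependent ℝ v') {ζ : ℝ} (hζ : 0 ≤ ζ) (hvv' : ∀ i, dist (v' i) (v i) ≤ ζ) :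
    dProj (simplexDir v) (simplexDir v') ≤ 8 * m * ζ * Lam v := by
  have hδ : 0 ≤ 2 * m * ζ * Lam v := by have := lam_nonneg v; positivity
  have := Submodule.norm_starProjection_sub_le_four_mul
    (by rw [finrank_simplexDir hv, finrank_simplexDir hv']) hδ
    fun y hy => norm_sub_starProjection_simplexDir_le hv hvv' hy
  rw [dProj_eq_norm]
  linarith

theorem exists_near_simplex_with_simplexDir_eq {v : Fin (m + 1) → 𝔼} (hv : AffineIndependent ℝ v)
    {D : Submodule ℝ 𝔼} (hD : Module.finrank ℝ D = m) (hvD : dProj (simplexDir v) D < 1) :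
    ∃ v' : Fin (m + 1) → 𝔼, (∀ i, dist (v' i) (v i) ≤ dProj (simplexDir v) D * ‖v i - v 0‖) ∧
      AffineIndependent ℝ v' ∧ D = simplexDir v' := by
  let f : 𝔼 →ᵃ[ℝ] 𝔼 := AffineMap.mk' (fun x => D.starProjection (x - v 0) + v 0)
    D.starProjection.toLinearMap (v 0) fun x => by simp
  have hdir : simplexDir (f ∘ v) = D := by
    rw [simplexDir_comp_affineMap, AffineMap.mk'_linear]
    exact Submodule.map_starProjection_eq_of_norm_sub_lt_one (by rw [finrank_simplexDir hv, hD])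
      hvD
  refine ⟨f ∘ v, fun i => ?_, affineIndependent_of_finrank_simplexDir (by rw [hdir, hD]),
    hdir.symm⟩
  have hfix : (simplexDir v).starProjection (v i - v 0) = v i - v 0 :=
    (simplexDir v).starProjection_eq_self_iff.mpr (sub_mem_simplexDir v i 0)
  calc dist (f (v i)) (v i)
      = ‖((simplexDir v).starProjection - D.starProjection) (v i - v 0)‖ := by
        rw [dist_eq_norm, ← norm_neg, sub_apply, hfix]
        change ‖-(D.starProjection (v i - v 0) + v 0 - v i)‖ = _
        congr 1
        abel
    _ ≤ _ := ContinuousLinearMap.le_opNorm _ _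

end Simplex

theorem stmt_6_general (n d : ℕ) :
    ∃ C₁ > (0:ℝ), ∃ C₂ > (0:ℝ),
      ∀ v : Fin (d+1) → EuclideanSpace ℝ (Fin n), AffineIndependent ℝ v →
        ∀ ζ : ℝ, 0 < ζ → ζ < min (rMin v / 2) (1 / Lam v) →
          (∀ D : Submodule ℝ (EuclideanSpace ℝ (Fin n)), Module.finrank ℝ ↥D = d →
            dProj (simplexDir v) D < C₁ * ζ / rMax v →
            ∃ v' : Fin (d+1) → EuclideanSpace ℝ (Fin n),
              (∀ i, dist (v' i) (v i) < ζ) ∧ AffineIndependent ℝ v' ∧ D = simplexDir v') ∧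
          (∀ v' : Fin (d+1) → EuclideanSpace ℝ (Fin n),
            (∀ i, dist (v' i) (v i) < ζ) → AffineIndependent ℝ v' →
            dProj (simplexDir v) (simplexDir v') < C₂ * ζ * Lam v) := by
  refine ⟨1, one_pos, 8 * (d + 1), by positivity, fun v hv ζ hζ hζv => ⟨?_, ?_⟩⟩
  · intro D hD hvD
    have hrMax : 2 * ζ < rMax v := by
      linarith [rMin_le_rMax v, (lt_min_iff.mp hζv).1]
    have hvD' : dProj (simplexDir v) D * rMax v < ζ := by
      rwa [one_mul, lt_div_iff₀ (by linarith)] at hvD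
    have hvD1 : dProj (simplexDir v) D < 1 :=
      lt_of_mul_lt_mul_right (hvD'.trans (by linarith)) (by linarith)
    obtain ⟨v', hvv', hv', rfl⟩ := exists_near_simplex_with_simplexDir_eq hv hD hvD1
    refine ⟨v', fun i => (hvv' i).trans_lt (lt_of_le_of_lt ?_ hvD'), hv', rfl⟩
    exact mul_le_mul_of_nonneg_left (dist_eq_norm (v i) (v 0) ▸ dist_le_rMax v i 0)
      (norm_nonneg _)
  · intro v' hvv' hv'
    have hΛ : 0 < Lam v := one_div_pos.mp (hζ.trans (lt_min_iff.mp hζv).2)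
    calc dProj (simplexDir v) (simplexDir v')
        ≤ 8 * d * ζ * Lam v := dProj_simplexDir_le hv hv' hζ.le fun i => (hvv' i).le
      _ < 8 * (d + 1) * ζ * Lam v := by gcongr; linarith

theorem stmt_6 (n d : ℕ) (hd : d ≤ n) :
    ∃ C₁ > (0:ℝ), ∃ C₂ > (0:ℝ),
      ∀ v : Fin (d+1) → EuclideanSpace ℝ (Fin n), AffineIndependent ℝ v →
        ∀ ζ : ℝ, 0 < ζ → ζ < min (rMin v / 2) (1 / Lam v) →
          (∀ D : Submodule ℝ (EuclideanSpace ℝ (Fin n)), Module.finrank ℝ ↥D = d →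
            dProj (simplexDir v) D < C₁ * ζ / rMax v →
            ∃ v' : Fin (d+1) → EuclideanSpace ℝ (Fin n),
              (∀ i, dist (v' i) (v i) < ζ) ∧ AffineIndependent ℝ v' ∧ D = simplexDir v') ∧
          (∀ v' : Fin (d+1) → EuclideanSpace ℝ (Fin n),
            (∀ i, dist (v' i) (v i) < ζ) → AffineIndependent ℝ v' →
            dProj (simplexDir v) (simplexDir v') < C₂ * ζ * Lam v) :=
  stmt_6_general n d
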